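/- arXiv:2111.11142 — 7 statements merged into one kernel-verified Lean document; each statement's English description precedes it below -/
import Mathlib

section
/- Let u : ℝ → ℝ be continuous and nonnegative, with a zero set that is nonempty and of Lebesgue measure zero. Assume that for all z, z1, z2 ∈ ℝ, u(z) ≤ (z − (z1+z2)/2)² + u(z1) + u(z2). Then u has exactly one zero, i.e. there is a unique z* ∈ ℝ with u(z*) = 0. -/
theorem stmt_2 (u : ℝ → ℝ) (hc : Continuous u) (hnn : ∀ z, 0 ≤ u z)
    (hne : {z | u z = 0}.Nonempty)
    (hm : MeasureTheory.volume {z | u z = 0} = 0)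
    (h : ∀ z z1 z2 : ℝ, u z ≤ (z - (z1 + z2) / 2) ^ 2 + u z1 + u z2) :
    ∃! zs : ℝ, u zs = 0 := by
  set S : Set ℝ := {z | u z = 0} with hS
  have hScl : IsClosed S := isClosed_eq hc continuous_const
  -- midpoint of two zeros is a zero
  have hmid : ∀ z1 ∈ S, ∀ z2 ∈ S, (z1 + z2) / 2 ∈ S := by
    intro z1 h1 z2 h2
    have := h ((z1 + z2) / 2) z1 z2
    simp only [hS, Set.mem_setOf_eq] at h1 h2 ⊢
    rw [h1, h2] at this
    simp at this
    exact le_antisymm this (hnn _)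
  have key : ∀ p q : ℝ, p ∈ S → q ∈ S → p < q → False := by
    intro p q hp hq hpq
    have hsub : Set.Ioo p q ⊆ S := by
      intro t ht
      by_contra htS
      have hA : (S ∩ Set.Icc p t).Nonempty := ⟨p, hp, le_refl _, ht.1.le⟩
      have hB : (S ∩ Set.Icc t q).Nonempty := ⟨q, hq, ht.2.le, le_refl _⟩
      have hAc : IsClosed (S ∩ Set.Icc p t) := hScl.inter isClosed_Icc
      have hBc : IsClosed (S ∩ Set.Icc t q) := hScl.inter isClosed_Icc
      have hAbdd : BddAbove (S ∩ Set.Icc p t) := ⟨t, fun x hx => hx.2.2⟩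
      have hBbdd : BddBelow (S ∩ Set.Icc t q) := ⟨t, fun x hx => hx.2.1⟩
      set c := sSup (S ∩ Set.Icc p t)
      set d := sInf (S ∩ Set.Icc t q)
      have hcmem : c ∈ S ∩ Set.Icc p t := hAc.csSup_mem hA hAbdd
      have hdmem : d ∈ S ∩ Set.Icc t q := hBc.csInf_mem hB hBbdd
      have hct : c < t := lt_of_le_of_ne hcmem.2.2 (fun he => htS (he ▸ hcmem.1))
      have htd : t < d := lt_of_le_of_ne hdmem.2.1 (fun he => htS (he ▸ hdmem.1))
      have hmS : (c + d) / 2 ∈ S := hmid c hcmem.1 d hdmem.1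
      have hcm : c < (c + d) / 2 := by linarith
      have hmd : (c + d) / 2 < d := by linarith
      rcases le_or_gt ((c + d) / 2) t with hle | hlt2
      · have : (c + d) / 2 ≤ c :=
          le_csSup hAbdd ⟨hmS, le_trans hcmem.2.1 hcm.le, hle⟩
        linarith
      · have : d ≤ (c + d) / 2 :=
          csInf_le hBbdd ⟨hmS, hlt2.le, le_trans hmd.le hdmem.2.2⟩
        linarith
    have hvol : MeasureTheory.volume (Set.Ioo p q) ≤ MeasureTheory.volume S :=
      MeasureTheory.measure_mono hsub
    rw [hm, Real.volume_Ioo] at hvol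
    simp only [nonpos_iff_eq_zero, ENNReal.ofReal_eq_zero] at hvol
    linarith
  obtain ⟨a, ha⟩ := hne
  refine ⟨a, ha, fun b hb => ?_⟩
  by_contra hab
  rcases lt_or_gt_of_ne hab with hlt | hlt
  · exact key b a hb ha hlt
  · exact key a b ha hb hlt
end

section
/- Let u^A, u^a : ℝ → ℝ be nonnegative functions with a common zero z* (u^A(z*) = u^a(z*) = 0), satisfying the infinitesimal-model constraints: (i) for all z, z1, z2 ∈ ℝ, u^A(z) ≤ (z − (z1+z2)/2)² + u^A(z1) + u^A(z2) and u^A(z) ≤ (z − (z1+z2)/2)² + u^A(z1) + u^a(z2), with, for every z and ε > 0, some z1, z2 making at least one of these right-hand sides smaller than u^A(z) + ε; and (ii) the symmetric constraints for u^a with right-hand sides (z − (z1+z2)/2)² + u^a(z1) + u^a(z2) and (z − (z1+z2)/2)² + u^A(z1) + u^a(z2). Suppose moreover that the Legendre-type conjugates û^A(y) := sup_{z∈ℝ} ((z − z*)·y − u^A(z)) and û^a(y) := sup_{z∈ℝ} ((z − z*)·y − u^a(z)) are finite for every y ∈ ℝ. Then for all y ∈ ℝ: û^A(y) = max( y²/4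 + 2·û^A(y/2), y²/4 + û^A(y/2) + û^a(y/2) ) and û^a(y) = max( y²/4 + 2·û^a(y/2), y²/4 + û^a(y/2) + û^A(y/2) ). -/
/-!
Write `û(y) = sup_z ((z - z*) y - u z)`. Completing the square,
`(z - z*) y - (z - (z₁ + z₂) / 2)² ≤ y² / 4 + (z₁ - z*) (y / 2) + (z₂ - z*) (y / 2)`, with equality
at `z = (z₁ + z₂) / 2 + y / 2`. Hence each constraint `u z ≤ (z - (z₁ + z₂) / 2)² + v z₁ + w z₂`
gives `y² / 4 + v̂ (y / 2) + ŵ (y / 2) ≤ û y`, and near-attainment of one of the two constraints at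
every `z` gives the reverse bound by the maximum of the two right-hand sides.
-/

open Set

noncomputable def legendreConj (u : ℝ → ℝ) (zs y : ℝ) : ℝ :=
  sSup (range fun z => (z - zs) * y - u z)

lemma mul_sub_sq_le (z z₁ z₂ zs y : ℝ) :
    (z - zs) * y - (z - (z₁ + z₂) / 2) ^ 2 ≤
      y ^ 2 / 4 + (z₁ - zs) * (y / 2) + (z₂ - zs) * (y / 2) := by
  nlinarith [sq_nonneg (z - (z₁ + z₂) / 2 - y / 2)]

lemma mul_sub_sq_eq (z₁ z₂ zs y : ℝ) :
    ((z₁ + z₂) / 2 + y / 2 - zs) * y - ((z₁ + z₂) / 2 + y / 2 - (z₁ + z₂) / 2) ^ 2 =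
      y ^ 2 / 4 + (z₁ - zs) * (y / 2) + (z₂ - zs) * (y / 2) := by
  ring

section LegendreConj

variable {u v w v' w' : ℝ → ℝ} {zs y : ℝ}

lemma le_legendreConj (hu : BddAbove (range fun z => (z - zs) * y - u z)) (z : ℝ) :
    (z - zs) * y - u z ≤ legendreConj u zs y :=
  le_csSup hu ⟨z, rfl⟩

lemma legendreConj_le {c : ℝ} (h : ∀ z, (z - zs) * y - u z ≤ c) : legendreConj u zs y ≤ c :=
  csSup_le (range_nonempty _) (forall_mem_range.2 h)

lemma add_legendreConj_le (hu : BddAbove (range fun z => (z - zs) * y - u z))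
    (h : ∀ z z₁ z₂, u z ≤ (z - (z₁ + z₂) / 2) ^ 2 + v z₁ + w z₂) :
    y ^ 2 / 4 + legendreConj v zs (y / 2) + legendreConj w zs (y / 2) ≤ legendreConj u zs y := by
  have pair : ∀ z₁ z₂, (z₁ - zs) * (y / 2) - v z₁ + ((z₂ - zs) * (y / 2) - w z₂) ≤
      legendreConj u zs y - y ^ 2 / 4 := fun z₁ z₂ => by
    have hz := h ((z₁ + z₂) / 2 + y / 2) z₁ z₂
    linarith [le_legendreConj hu ((z₁ + z₂) / 2 + y / 2), mul_sub_sq_eq z₁ z₂ zs y]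
  have inner : ∀ z₁, legendreConj w zs (y / 2) ≤
      legendreConj u zs y - y ^ 2 / 4 - ((z₁ - zs) * (y / 2) - v z₁) := fun z₁ =>
    legendreConj_le fun z₂ => by linarith [pair z₁ z₂]
  have outer : legendreConj v zs (y / 2) ≤
      legendreConj u zs y - y ^ 2 / 4 - legendreConj w zs (y / 2) :=
    legendreConj_le fun z₁ => by linarith [inner z₁]
  linarith

lemma mul_sub_lt_add_legendreConj {z z₁ z₂ ε : ℝ}
    (hv : BddAbove (range fun z => (z - zs) * (y / 2) - v z))
    (hw : BddAbove (range fun z => (z - zs) * (y / 2) - w z))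
    (h : (z - (z₁ + z₂) / 2) ^ 2 + v z₁ + w z₂ < u z + ε) :
    (z - zs) * y - u z < y ^ 2 / 4 + legendreConj v zs (y / 2) + legendreConj w zs (y / 2) + ε := by
  linarith [mul_sub_sq_le z z₁ z₂ zs y, le_legendreConj hv z₁, le_legendreConj hw z₂]

lemma legendreConj_le_max
    (hv : BddAbove (range fun z => (z - zs) * (y / 2) - v z))
    (hw : BddAbove (range fun z => (z - zs) * (y / 2) - w z))
    (hv' : BddAbove (range fun z => (z - zs) * (y / 2) - v' z))
    (hw' : BddAbove (range fun z => (z - zs) * (y / 2) - w' z))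
    (h : ∀ z, ∀ ε > 0, ∃ z₁ z₂,
      (z - (z₁ + z₂) / 2) ^ 2 + v z₁ + w z₂ < u z + ε ∨
      (z - (z₁ + z₂) / 2) ^ 2 + v' z₁ + w' z₂ < u z + ε) :
    legendreConj u zs y ≤
      max (y ^ 2 / 4 + legendreConj v zs (y / 2) + legendreConj w zs (y / 2))
        (y ^ 2 / 4 + legendreConj v' zs (y / 2) + legendreConj w' zs (y / 2)) := by
  refine le_of_forall_pos_le_add fun ε hε => legendreConj_le fun z => ?_
  obtain ⟨z₁, z₂, hz | hz⟩ := h z ε hε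
  · exact (mul_sub_lt_add_legendreConj hv hw hz).le.trans (by gcongr; exact le_max_left _ _)
  · exact (mul_sub_lt_add_legendreConj hv' hw' hz).le.trans (by gcongr; exact le_max_right _ _)

lemma legendreConj_eq_max (hu : BddAbove (range fun z => (z - zs) * y - u z))
    (hv : BddAbove (range fun z => (z - zs) * (y / 2) - v z))
    (hw : BddAbove (range fun z => (z - zs) * (y / 2) - w z))
    (hv' : BddAbove (range fun z => (z - zs) * (y / 2) - v' z))
    (hw' : BddAbove (range fun z => (z - zs) * (y / 2) - w' z))
    (h : ∀ z z₁ z₂, u z ≤ (z - (z₁ + z₂) / 2) ^ 2 + v z₁ + w z₂)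
    (h' : ∀ z z₁ z₂, u z ≤ (z - (z₁ + z₂) / 2) ^ 2 + v' z₁ + w' z₂)
    (hε : ∀ z, ∀ ε > 0, ∃ z₁ z₂,
      (z - (z₁ + z₂) / 2) ^ 2 + v z₁ + w z₂ < u z + ε ∨
      (z - (z₁ + z₂) / 2) ^ 2 + v' z₁ + w' z₂ < u z + ε) :
    legendreConj u zs y =
      max (y ^ 2 / 4 + legendreConj v zs (y / 2) + legendreConj w zs (y / 2))
        (y ^ 2 / 4 + legendreConj v' zs (y / 2) + legendreConj w' zs (y / 2)) :=
  le_antisymm (legendreConj_le_max hv hw hv' hw' hε)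
    (max_le (add_legendreConj_le hu h) (add_legendreConj_le hu h'))

end LegendreConj

theorem stmt_4_general (uA ua : ℝ → ℝ) (zs : ℝ)
    (hA1 : ∀ z z1 z2 : ℝ, uA z ≤ (z - (z1 + z2) / 2) ^ 2 + uA z1 + uA z2)
    (hA2 : ∀ z z1 z2 : ℝ, uA z ≤ (z - (z1 + z2) / 2) ^ 2 + uA z1 + ua z2)
    (hA3 : ∀ z : ℝ, ∀ ε > 0, ∃ z1 z2 : ℝ,
      (z - (z1 + z2) / 2) ^ 2 + uA z1 + uA z2 < uA z + ε ∨
      (z - (z1 + z2) / 2) ^ 2 + uA z1 + ua z2 < uA z + ε)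
    (ha1 : ∀ z z1 z2 : ℝ, ua z ≤ (z - (z1 + z2) / 2) ^ 2 + ua z1 + ua z2)
    (ha2 : ∀ z z1 z2 : ℝ, ua z ≤ (z - (z1 + z2) / 2) ^ 2 + uA z1 + ua z2)
    (ha3 : ∀ z : ℝ, ∀ ε > 0, ∃ z1 z2 : ℝ,
      (z - (z1 + z2) / 2) ^ 2 + ua z1 + ua z2 < ua z + ε ∨
      (z - (z1 + z2) / 2) ^ 2 + uA z1 + ua z2 < ua z + ε)
    (hbA : ∀ y : ℝ, BddAbove (Set.range fun z => (z - zs) * y - uA z))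
    (hba : ∀ y : ℝ, BddAbove (Set.range fun z => (z - zs) * y - ua z)) :
    ∀ y : ℝ,
      sSup (Set.range fun z => (z - zs) * y - uA z) =
        max (y ^ 2 / 4 + 2 * sSup (Set.range fun z => (z - zs) * (y / 2) - uA z))
          (y ^ 2 / 4 + sSup (Set.range fun z => (z - zs) * (y / 2) - uA z)
            + sSup (Set.range fun z => (z - zs) * (y / 2) - ua z)) ∧
      sSup (Set.range fun z => (z - zs) * y - ua z) =
        max (y ^ 2 / 4 + 2 * sSup (Set.range fun z => (z - zs) * (y / 2) - ua z))
          (y ^ 2 / 4 + sSup (Set.range fun z => (z - zs) * (y / 2) - ua z)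
            + sSup (Set.range fun z => (z - zs) * (y / 2) - uA z)) := by
  intro y
  have hA := legendreConj_eq_max (hbA y) (hbA _) (hbA _) (hbA _) (hba _) hA1 hA2 hA3
  have ha := legendreConj_eq_max (hba y) (hba _) (hba _) (hbA _) (hba _) ha1 ha2 ha3
  simp only [legendreConj] at hA ha
  exact ⟨hA.trans (by rw [two_mul, add_assoc]), ha.trans (by congr 1 <;> ring)⟩

theorem stmt_4 (uA ua : ℝ → ℝ) (zs : ℝ)
    (hAnn : ∀ z, 0 ≤ uA z) (hann : ∀ z, 0 ≤ ua z)
    (hAz : uA zs = 0) (haz : ua zs = 0)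
    (hA1 : ∀ z z1 z2 : ℝ, uA z ≤ (z - (z1 + z2) / 2) ^ 2 + uA z1 + uA z2)
    (hA2 : ∀ z z1 z2 : ℝ, uA z ≤ (z - (z1 + z2) / 2) ^ 2 + uA z1 + ua z2)
    (hA3 : ∀ z : ℝ, ∀ ε > 0, ∃ z1 z2 : ℝ,
      (z - (z1 + z2) / 2) ^ 2 + uA z1 + uA z2 < uA z + ε ∨
      (z - (z1 + z2) / 2) ^ 2 + uA z1 + ua z2 < uA z + ε)
    (ha1 : ∀ z z1 z2 : ℝ, ua z ≤ (z - (z1 + z2) / 2) ^ 2 + ua z1 + ua z2)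
    (ha2 : ∀ z z1 z2 : ℝ, ua z ≤ (z - (z1 + z2) / 2) ^ 2 + uA z1 + ua z2)
    (ha3 : ∀ z : ℝ, ∀ ε > 0, ∃ z1 z2 : ℝ,
      (z - (z1 + z2) / 2) ^ 2 + ua z1 + ua z2 < ua z + ε ∨
      (z - (z1 + z2) / 2) ^ 2 + uA z1 + ua z2 < ua z + ε)
    (hbA : ∀ y : ℝ, BddAbove (Set.range fun z => (z - zs) * y - uA z))
    (hba : ∀ y : ℝ, BddAbove (Set.range fun z => (z - zs) * y - ua z)) :
    ∀ y : ℝ,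
      sSup (Set.range fun z => (z - zs) * y - uA z) =
        max (y ^ 2 / 4 + 2 * sSup (Set.range fun z => (z - zs) * (y / 2) - uA z))
          (y ^ 2 / 4 + sSup (Set.range fun z => (z - zs) * (y / 2) - uA z)
            + sSup (Set.range fun z => (z - zs) * (y / 2) - ua z)) ∧
      sSup (Set.range fun z => (z - zs) * y - ua z) =
        max (y ^ 2 / 4 + 2 * sSup (Set.range fun z => (z - zs) * (y / 2) - ua z))
          (y ^ 2 / 4 + sSup (Set.range fun z => (z - zs) * (y / 2) - ua z)
            + sSup (Set.range fun z => (z - zs) * (y / 2) - uA z)) :=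
  stmt_4_general uA ua zs hA1 hA2 hA3 ha1 ha2 ha3 hbA hba
end

section
/- Let f, g : ℝ → ℝ be continuous functions with f(0) = g(0) = 0, satisfying for all y ∈ ℝ: f(y) = y²/4 + max( 2·f(y/2), f(y/2) + g(y/2) ) and g(y) = y²/4 + max( 2·g(y/2), f(y/2) + g(y/2) ). Then f = g. -/
theorem stmt_5 (f g : ℝ → ℝ) (hf : Continuous f) (hg : Continuous g)
    (hf0 : f 0 = 0) (hg0 : g 0 = 0)
    (hfe : ∀ y : ℝ, f y = y ^ 2 / 4 + max (2 * f (y / 2)) (f (y / 2) + g (y / 2)))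
    (hge : ∀ y : ℝ, g y = y ^ 2 / 4 + max (2 * g (y / 2)) (f (y / 2) + g (y / 2))) :
    f = g := by
  have key : ∀ z : ℝ, f z - g z = f (z / 2) - g (z / 2) := by
    intro z
    rw [hfe z, hge z]
    have h1 : max (2 * f (z / 2)) (f (z / 2) + g (z / 2))
        = f (z / 2) + max (f (z / 2)) (g (z / 2)) := by
      rw [two_mul, max_add_add_left]
    have h2 : max (2 * g (z / 2)) (f (z / 2) + g (z / 2))
        = g (z / 2) + max (f (z / 2)) (g (z / 2)) := by
      rw [two_mul, add_comm (f (z / 2)), max_add_add_left, max_comm]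
    rw [h1, h2]
    ring
  funext y
  have iter : ∀ n : ℕ, f y - g y = f (y / 2 ^ n) - g (y / 2 ^ n) := by
    intro n
    induction n with
    | zero => simp
    | succ n ih =>
      rw [ih, key (y / 2 ^ n)]
      ring_nf
  have hlim : Filter.Tendsto (fun n : ℕ => y / 2 ^ n) Filter.atTop (nhds 0) := by
    simpa [div_eq_mul_inv, ← inv_pow] using
      (tendsto_pow_atTop_nhds_zero_of_lt_one (by norm_num : (0:ℝ) ≤ (2:ℝ)⁻¹)
        (by norm_num : (2:ℝ)⁻¹ < 1)).const_mul y
  have hcont : Filter.Tendsto (fun n : ℕ => f (y / 2 ^ n) - g (y / 2 ^ n))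
      Filter.atTop (nhds (f 0 - g 0)) :=
    ((hf.sub hg).tendsto 0).comp hlim
  have : f y - g y = f 0 - g 0 := by
    refine tendsto_nhds_unique ?_ hcont
    exact tendsto_const_nhds.congr fun n => iter n
  have : f y - g y = 0 := by rw [this, hf0, hg0]; ring
  linarith
end

section
/- Let f : ℝ → ℝ satisfy f(0) = 0, and assume f has a right derivative β at 0 and a left derivative α at 0 (i.e. f(t)/t → β as t → 0⁺ and f(t)/t → α as t → 0⁻). If f(y) = y²/4 + 2·f(y/2) for all y ∈ ℝ, then f(y) = y²/2 + β·y for all y > 0 and f(y) = y²/2 + α·y for all y < 0. -/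
/-!
Iterating the functional equation n times gives
`f y = (y²/2)(1 - 2⁻ⁿ) + 2ⁿ f (y / 2ⁿ)`, and `2ⁿ f (y / 2ⁿ) = y · (f t / t)` at `t = y / 2ⁿ`,
which tends to `y` times the one-sided derivative on the side of `0` where `y` lies.
-/

open Filter Topology

lemma apply_eq_of_iterate_halving (f : ℝ → ℝ) (heq : ∀ y : ℝ, f y = y ^ 2 / 4 + 2 * f (y / 2))
    (y : ℝ) (n : ℕ) : f y = y ^ 2 / 2 * (1 - (2 ^ n)⁻¹) + 2 ^ n * f (y / 2 ^ n) := by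
  induction n with
  | zero => simp
  | succ n ih =>
    rw [ih, heq (y / 2 ^ n), div_div, ← pow_succ]
    field_simp
    ring

lemma tendsto_inv_two_pow_atTop : Tendsto (fun n : ℕ => ((2 : ℝ) ^ n)⁻¹) atTop (𝓝 0) :=
  tendsto_inv_atTop_zero.comp (tendsto_pow_atTop_atTop_of_one_lt one_lt_two)

lemma tendsto_two_pow_mul_apply_div_two_pow {f : ℝ → ℝ} {S : Set ℝ} {c y : ℝ}
    (hc : Tendsto (fun t => f t / t) (𝓝[S] 0) (𝓝 c)) (hy : y ≠ 0) (hS : ∀ n : ℕ, y / 2 ^ n ∈ S) :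
    Tendsto (fun n : ℕ => 2 ^ n * f (y / 2 ^ n)) atTop (𝓝 (y * c)) := by
  have hzero : Tendsto (fun n : ℕ => y / 2 ^ n) atTop (𝓝[S] 0) := by
    refine tendsto_nhdsWithin_of_tendsto_nhds_of_eventually_within _ ?_ (Eventually.of_forall hS)
    simpa only [div_eq_mul_inv, mul_zero] using tendsto_inv_two_pow_atTop.const_mul y
  have hrewrite : ∀ n : ℕ, 2 ^ n * f (y / 2 ^ n) = y * (f (y / 2 ^ n) / (y / 2 ^ n)) := by
    intro n
    field_simp
  simpa only [hrewrite, Function.comp_def] using (hc.comp hzero).const_mul y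

lemma eq_sq_div_two_add_mul_of_tendsto_div {f : ℝ → ℝ} {S : Set ℝ} {c y : ℝ}
    (heq : ∀ y : ℝ, f y = y ^ 2 / 4 + 2 * f (y / 2))
    (hc : Tendsto (fun t => f t / t) (𝓝[S] 0) (𝓝 c)) (hy : y ≠ 0) (hS : ∀ n : ℕ, y / 2 ^ n ∈ S) :
    f y = y ^ 2 / 2 + c * y := by
  have hquad : Tendsto (fun n : ℕ => y ^ 2 / 2 * (1 - ((2 : ℝ) ^ n)⁻¹)) atTop
      (𝓝 (y ^ 2 / 2 * (1 - 0))) :=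
    (tendsto_inv_two_pow_atTop.const_sub 1).const_mul _
  have hlim := hquad.add (tendsto_two_pow_mul_apply_div_two_pow hc hy hS)
  simp only [← apply_eq_of_iterate_halving f heq y] at hlim
  rw [tendsto_const_nhds_iff.mp hlim]
  ring

theorem stmt_6_general (f : ℝ → ℝ) (α β : ℝ)
    (hβ : Filter.Tendsto (fun t => f t / t) (nhdsWithin 0 (Set.Ioi 0)) (nhds β))
    (hα : Filter.Tendsto (fun t => f t / t) (nhdsWithin 0 (Set.Iio 0)) (nhds α))
    (heq : ∀ y : ℝ, f y = y ^ 2 / 4 + 2 * f (y / 2)) :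
    (∀ y > 0, f y = y ^ 2 / 2 + β * y) ∧ (∀ y < 0, f y = y ^ 2 / 2 + α * y) :=
  ⟨fun y hy => eq_sq_div_two_add_mul_of_tendsto_div heq hβ hy.ne'
      fun _ => div_pos hy (by positivity),
    fun y hy => eq_sq_div_two_add_mul_of_tendsto_div heq hα hy.ne
      fun _ => div_neg_of_neg_of_pos hy (by positivity)⟩

theorem stmt_6 (f : ℝ → ℝ) (α β : ℝ) (hf0 : f 0 = 0)
    (hβ : Filter.Tendsto (fun t => f t / t) (nhdsWithin 0 (Set.Ioi 0)) (nhds β))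
    (hα : Filter.Tendsto (fun t => f t / t) (nhdsWithin 0 (Set.Iio 0)) (nhds α))
    (heq : ∀ y : ℝ, f y = y ^ 2 / 4 + 2 * f (y / 2)) :
    (∀ y > 0, f y = y ^ 2 / 2 + β * y) ∧ (∀ y < 0, f y = y ^ 2 / 2 + α * y) :=
  stmt_6_general f α β hβ hα heq
end

section
/- Let K ≥ 1 and P : Fin K → Set (Fin K) with k ∈ P k for every k. For each k let f_k : ℝ → ℝ be continuous and nonnegative with f_k(0) = 0, and assume that for all k and all y ∈ ℝ, f_k(y) = y²/4 + max_{l ∈ P k} ( f_l(y/2) + f_k(y/2) ) (the maximum over the finite nonempty set P k). If moreover max_{k ∈ Fin K} f_k(y) = y²/2 for all y ∈ ℝ, then f_k(y) = y²/2 for every k ∈ Fin K and every y ∈ ℝ. -/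
theorem stmt_8 (K : ℕ) (hK : 1 ≤ K) (P : Fin K → Set (Fin K))
    (H1 : ∀ k, k ∈ P k)
    (f : Fin K → ℝ → ℝ)
    (hc : ∀ k, Continuous (f k)) (hnn : ∀ k y, 0 ≤ f k y) (h0 : ∀ k, f k 0 = 0)
    (heq : ∀ k, ∀ y : ℝ,
      f k y = y ^ 2 / 4 + sSup ((fun l => f l (y / 2) + f k (y / 2)) '' P k))
    (hmax : ∀ y : ℝ, (⨆ k, f k y) = y ^ 2 / 2) :
    ∀ k, ∀ y : ℝ, f k y = y ^ 2 / 2 := by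
  haveI : NeZero K := ⟨by omega⟩
  have step : ∀ k (y : ℝ), y ^ 2 / 4 + 2 * f k (y / 2) ≤ f k y := by
    intro k y
    rw [heq k y]
    have hb : BddAbove ((fun l => f l (y / 2) + f k (y / 2)) '' P k) :=
      ((P k).toFinite.image _).bddAbove
    have hm : f k (y / 2) + f k (y / 2) ≤
        sSup ((fun l => f l (y / 2) + f k (y / 2)) '' P k) :=
      le_csSup hb ⟨k, H1 k, rfl⟩
    linarith
  have iter : ∀ (n : ℕ) k (y : ℝ),
      y ^ 2 / 2 * (1 - (1 / 2 : ℝ) ^ n) + 2 ^ n * f k (y / 2 ^ n) ≤ f k y := by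
    intro n
    induction n with
    | zero => intro k y; simp
    | succ n ih =>
      intro k y
      have h1 := step k y
      have h2 := ih k (y / 2)
      have e1 : (y / 2) / 2 ^ n = y / 2 ^ (n + 1) := by ring
      have e2 : (y / 2) ^ 2 = y ^ 2 / 4 := by ring
      rw [e1, e2] at h2
      have e3 : ((1 : ℝ) / 2) ^ (n + 1) = (1 / 2) ^ n / 2 := by ring
      have e4 : (2 : ℝ) ^ (n + 1) = 2 * 2 ^ n := by ring
      have e5 : y / 2 ^ (n + 1) = y / (2 * 2 ^ n) := by rw [e4]
      rw [e5] at h2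
      rw [e3, e4]
      nlinarith [h1, h2]
  intro k y
  have hlow : y ^ 2 / 2 ≤ f k y := by
    have htend : Filter.Tendsto (fun n : ℕ => y ^ 2 / 2 * (1 - (1 / 2 : ℝ) ^ n))
        Filter.atTop (nhds (y ^ 2 / 2)) := by
      have : Filter.Tendsto (fun n : ℕ => ((1 : ℝ) / 2) ^ n) Filter.atTop (nhds 0) := by
        apply tendsto_pow_atTop_nhds_zero_of_lt_one <;> norm_num
      have h' : Filter.Tendsto (fun n : ℕ => (1 : ℝ) - (1 / 2 : ℝ) ^ n)
          Filter.atTop (nhds (1 - 0)) := (tendsto_const_nhds (x := (1:ℝ))).sub this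
      have h'' := h'.const_mul (y ^ 2 / 2)
      simpa using h''
    refine le_of_tendsto htend (Filter.Eventually.of_forall fun n => ?_)
    have h := iter n k y
    have hp : (0 : ℝ) ≤ 2 ^ n * f k (y / 2 ^ n) :=
      mul_nonneg (by positivity) (hnn _ _)
    linarith
  have hup : f k y ≤ y ^ 2 / 2 := by
    rw [← hmax y]
    exact le_ciSup (f := fun k => f k y) (Set.finite_range _).bddAbove k
  linarith
end

section
/- Let m1, m2, α > 0 and N1^a, N1^A, N2^a, N2^A > 0. Then the 3×3 real matrix J_{S_L} (defined in the context) has strictly negative determinant; consequently, for every b ∈ ℝ³ the linear system J_{S_L} x = b has a unique solution x ∈ ℝ³. -/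
/-!
Subtracting the second row from the third (using `p₁ + p₂ + q₁ + q₂ = 2`) and then clearing the
first column reduces `det J_{S_L}` to `-1/2` times a 2×2 determinant which, after `pᵢ + qᵢ = 1`,
is a polynomial in the (nonnegative) entries with nonnegative coefficients and a positive term.
-/

namespace Matrix

theorem existsUnique_mulVec_eq_of_isUnit_det {n R : Type*} [Fintype n] [DecidableEq n]
    [CommRing R] {M : Matrix n n R} (h : IsUnit M.det) (b : n → R) : ∃! x, M *ᵥ x = b :=
  have hM : IsUnit M := (isUnit_iff_isUnit_det M).2 h
  Function.Bijective.existsUnique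
    ⟨mulVec_injective_of_isUnit hM, mulVec_surjective_iff_isUnit.2 hM⟩ b

end Matrix

/-- `J_{S_L}` with `A = α m₂ N₂^A / N₁^A`, `B = m₁ N₁^A / (α N₂^A)`, and `C`, `D` the same
expressions for allele `a`. -/
noncomputable def selectionJacobian (A B C D p₁ q₁ p₂ q₂ : ℝ) : Matrix (Fin 3) (Fin 3) ℝ :=
  !![-(1/2 : ℝ), (1/2) * (A - B), -(1/2) * (C - D);
     (q₁ - q₂) / 2, -(A + B) - (q₁ + q₂) / 4, (q₁ + q₂) / 4;
     (p₂ - p₁) / 2, (p₁ + p₂) / 4, -(C + D) - (p₁ + p₂) / 4]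

theorem det_selectionJacobian {A B C D p₁ q₁ p₂ q₂ : ℝ} (h₁ : p₁ + q₁ = 1) (h₂ : p₂ + q₂ = 1) :
    (selectionJacobian A B C D p₁ q₁ p₂ q₂).det =
      -(1/2) * (A * C + B * D + (p₁ + q₂) * A * D + (p₂ + q₁) * B * C
        + (p₁ * A + p₂ * B + q₁ * C + q₂ * D) / 2) := by
  obtain rfl : q₁ = 1 - p₁ := by linarith
  obtain rfl : q₂ = 1 - p₂ := by linarith
  rw [selectionJacobian, Matrix.det_fin_three]
  simp only [Matrix.of_apply, Matrix.cons_val', Matrix.cons_val_zero, Matrix.cons_val_one,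
    Matrix.cons_val, Matrix.cons_val_fin_one]
  ring

theorem det_selectionJacobian_neg {A B C D p₁ q₁ p₂ q₂ : ℝ} (hA : 0 < A) (hB : 0 ≤ B)
    (hC : 0 < C) (hD : 0 ≤ D) (hp₁ : 0 ≤ p₁) (hq₁ : 0 ≤ q₁) (hp₂ : 0 ≤ p₂) (hq₂ : 0 ≤ q₂)
    (h₁ : p₁ + q₁ = 1) (h₂ : p₂ + q₂ = 1) :
    (selectionJacobian A B C D p₁ q₁ p₂ q₂).det < 0 := by
  rw [det_selectionJacobian h₁ h₂]
  have : 0 < A * C + B * D + (p₁ + q₂) * A * D + (p₂ + q₁) * B * C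
      + (p₁ * A + p₂ * B + q₁ * C + q₂ * D) / 2 := by positivity
  linarith

theorem stmt_10 (m1 m2 a N1a N1A N2a N2A : ℝ)
    (hm1 : 0 < m1) (hm2 : 0 < m2) (ha : 0 < a)
    (h1 : 0 < N1a) (h2 : 0 < N1A) (h3 : 0 < N2a) (h4 : 0 < N2A) :
    let p1 := N1A / (N1A + N1a); let q1 := N1a / (N1A + N1a)
    let p2 := N2A / (N2A + N2a); let q2 := N2a / (N2A + N2a)
    let JSL : Matrix (Fin 3) (Fin 3) ℝ :=
      !![-(1/2 : ℝ),
         (1/2) * (a * m2 * N2A / N1A - m1 * N1A / (a * N2A)),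
         -(1/2) * (a * m2 * N2a / N1a - m1 * N1a / (a * N2a));
         (q1 - q2) / 2,
         -(a * m2 * N2A / N1A + m1 * N1A / (a * N2A)) - (q1 + q2) / 4,
         (q1 + q2) / 4;
         (p2 - p1) / 2,
         (p1 + p2) / 4,
         -(a * m2 * N2a / N1a + m1 * N1a / (a * N2a)) - (p1 + p2) / 4]
    JSL.det < 0 ∧ ∀ b : Fin 3 → ℝ, ∃! x : Fin 3 → ℝ, JSL.mulVec x = b := by
  intro p1 q1 p2 q2 JSL
  have hdet : JSL.det < 0 :=
    det_selectionJacobian_neg (by positivity) (by positivity) (by positivity) (by positivity)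
      (by positivity) (by positivity) (by positivity) (by positivity)
      (by simp only [p1, q1]; field_simp) (by simp only [p2, q2]; field_simp)
  exact ⟨hdet, Matrix.existsUnique_mulVec_eq_of_isUnit_det hdet.ne.isUnit⟩
end

section
/- Let m1, m2, α > 0 and N1^a, N1^A, N2^a, N2^A > 0. Then every complex eigenvalue of the 3×3 matrix J_{S_L} (defined in the context) has strictly negative real part. -/
/-!
The characteristic polynomial of a real `3 × 3` matrix `J` is
`μ³ - (tr J) μ² + (sum of the principal 2 × 2 minors) μ - det J`, and by the Routh–Hurwitz
criterion a real cubic `z³ + a z² + b z + c` with `a > 0`, `c > 0`, `c < a b` has all its roots in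
the open left half-plane. For `J_{S_L}`, once `q_i = 1 - p_i` is used, `-tr J = 1 + K + L + M + N`,
and both `-det J` and `(sum of minors) + det J` are polynomials with positive coefficients in the
positive quantities `K, L, M, N, p_i, q_i`. Hence `0 < -det J < (sum of minors) < (-tr J) · (sum of
minors)`.
-/

theorem Complex.re_neg_of_cubic_eq_zero {a b c : ℝ} (ha : 0 < a) (hc : 0 < c) (habc : c < a * b)
    {z : ℂ} (hz : z ^ 3 + a * z ^ 2 + b * z + c = 0) : z.re < 0 := by
  have hb : 0 < b := pos_of_mul_pos_right (hc.trans habc) ha.le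
  obtain ⟨hre, him⟩ := Complex.ext_iff.mp hz
  simp only [pow_succ, pow_zero, one_mul, Complex.add_re, Complex.add_im, Complex.mul_re,
    Complex.mul_im, Complex.ofReal_re, Complex.ofReal_im, Complex.zero_re, Complex.zero_im]
    at hre him
  set u := z.re
  set v := z.im
  by_contra! hu
  rcases eq_or_ne v 0 with hv | hv
  · rw [hv] at hre
    nlinarith [pow_nonneg hu 3, mul_nonneg ha.le (sq_nonneg u), mul_nonneg hb.le hu]
  · have hv2 : v ^ 2 = 3 * u ^ 2 + 2 * a * u + b :=
      mul_left_cancel₀ hv (by linear_combination -him)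
    -- eliminating `v ^ 2` from the real part
    have key : c - a * b = 2 * u * ((2 * u + a) ^ 2 + b) := by
      linear_combination hre + (3 * u + a) * hv2
    nlinarith [mul_nonneg hu (add_nonneg (sq_nonneg (2 * u + a)) hb.le)]

namespace Matrix

variable {R : Type*} [CommRing R]

def sumPrincipalMinors₂ (J : Matrix (Fin 3) (Fin 3) R) : R :=
  J 0 0 * J 1 1 - J 0 1 * J 1 0 + J 0 0 * J 2 2 - J 0 2 * J 2 0 + J 1 1 * J 2 2 - J 1 2 * J 2 1

theorem sumPrincipalMinors₂_of (a b c d e f g h i : R) :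
    sumPrincipalMinors₂ !![a, b, c; d, e, f; g, h, i] =
      a * e - b * d + a * i - c * g + e * i - f * h :=
  rfl

theorem det_fin_three_of (a b c d e f g h i : R) :
    det !![a, b, c; d, e, f; g, h, i] =
      a * e * i - a * f * h - b * d * i + b * f * g + c * d * h - c * e * g :=
  det_fin_three _

theorem sumPrincipalMinors₂_map {S : Type*} [CommRing S] (f : R →+* S)
    (J : Matrix (Fin 3) (Fin 3) R) : (J.map f).sumPrincipalMinors₂ = f J.sumPrincipalMinors₂ := by
  simp only [sumPrincipalMinors₂, map_apply, map_sub, map_add, map_mul]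

theorem eval_charpoly_fin_three (J : Matrix (Fin 3) (Fin 3) R) (μ : R) :
    J.charpoly.eval μ = μ ^ 3 - J.trace * μ ^ 2 + J.sumPrincipalMinors₂ * μ - J.det := by
  rw [eval_charpoly, det_fin_three, det_fin_three, trace_fin_three, sumPrincipalMinors₂]
  simp only [sub_apply, scalar_apply, diagonal_apply, Fin.reduceEq, ↓reduceIte]
  ring

theorem re_neg_of_mem_spectrum_map_ofReal {J : Matrix (Fin 3) (Fin 3) ℝ} (htr : J.trace < 0)
    (hdet : J.det < 0) (hJ : J.trace * J.sumPrincipalMinors₂ < J.det) {μ : ℂ}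
    (hμ : μ ∈ spectrum ℂ (J.map Complex.ofReal)) : μ.re < 0 := by
  have htr' : (J.map (↑) : Matrix _ _ ℂ).trace = J.trace :=
    (AddMonoidHom.map_trace Complex.ofRealHom J).symm
  have hdet' : (J.map (↑) : Matrix _ _ ℂ).det = J.det :=
    (RingHom.map_det Complex.ofRealHom J).symm
  have hJ' : (J.map (↑) : Matrix _ _ ℂ).sumPrincipalMinors₂ = J.sumPrincipalMinors₂ :=
    sumPrincipalMinors₂_map Complex.ofRealHom J
  rw [mem_spectrum_iff_isRoot_charpoly, Polynomial.IsRoot, eval_charpoly_fin_three, htr', hdet',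
    hJ'] at hμ
  refine Complex.re_neg_of_cubic_eq_zero (a := -J.trace) (b := J.sumPrincipalMinors₂)
    (c := -J.det) (by linarith) (by linarith) (by linarith) ?_
  push_cast
  linear_combination hμ

end Matrix

/-- `J_{S_L}` with `K = α m₂ N₂^A / N₁^A`, `L = m₁ N₁^A / (α N₂^A)`, `M = α m₂ N₂^a / N₁^a` and
`N = m₁ N₁^a / (α N₂^a)`. -/
noncomputable def jacobianSL (K L M N p₁ q₁ p₂ q₂ : ℝ) : Matrix (Fin 3) (Fin 3) ℝ :=
  !![-(1/2 : ℝ), (1/2) * (K - L), -(1/2) * (M - N);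
     (q₁ - q₂) / 2, -(K + L) - (q₁ + q₂) / 4, (q₁ + q₂) / 4;
     (p₂ - p₁) / 2, (p₁ + p₂) / 4, -(M + N) - (p₁ + p₂) / 4]

section jacobianSL

variable {K L M N p₁ q₁ p₂ q₂ : ℝ}

theorem trace_jacobianSL (hpq₁ : p₁ + q₁ = 1) (hpq₂ : p₂ + q₂ = 1) :
    (jacobianSL K L M N p₁ q₁ p₂ q₂).trace = -(1 + K + L + M + N) := by
  rw [jacobianSL, Matrix.trace_fin_three_of]
  linear_combination (-1/4 : ℝ) * hpq₁ - (1/4 : ℝ) * hpq₂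

theorem det_jacobianSL (hpq₁ : p₁ + q₁ = 1) (hpq₂ : p₂ + q₂ = 1) :
    (jacobianSL K L M N p₁ q₁ p₂ q₂).det =
      -((K * M + (p₁ + q₂) * K * N + (p₂ + q₁) * L * M + L * N) / 2
        + (K * p₁ + L * p₂ + M * q₁ + N * q₂) / 4) := by
  obtain rfl : q₁ = 1 - p₁ := by linarith
  obtain rfl : q₂ = 1 - p₂ := by linarith
  rw [jacobianSL, Matrix.det_fin_three_of]
  ring

theorem sumPrincipalMinors₂_jacobianSL_add_det (hpq₁ : p₁ + q₁ = 1) (hpq₂ : p₂ + q₂ = 1) :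
    (jacobianSL K L M N p₁ q₁ p₂ q₂).sumPrincipalMinors₂ + (jacobianSL K L M N p₁ q₁ p₂ q₂).det =
      1 / 4 + (K * (1 + p₁ + q₂) + L * (1 + p₂ + q₁) + M * (1 + p₂ + q₁) + N * (1 + p₁ + q₂)) / 4
        + (K * M + (p₂ + q₁) * K * N + (p₁ + q₂) * L * M + L * N) / 2
        + (K * p₂ + L * p₁ + M * q₂ + N * q₁) / 4 := by
  obtain rfl : q₁ = 1 - p₁ := by linarith
  obtain rfl : q₂ = 1 - p₂ := by linarith
  rw [jacobianSL, Matrix.sumPrincipalMinors₂_of, Matrix.det_fin_three_of]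
  ring

theorem re_neg_of_mem_spectrum_jacobianSL (hK : 0 < K) (hL : 0 < L) (hM : 0 < M) (hN : 0 < N)
    (hp₁ : 0 < p₁) (hq₁ : 0 < q₁) (hp₂ : 0 < p₂) (hq₂ : 0 < q₂)
    (hpq₁ : p₁ + q₁ = 1) (hpq₂ : p₂ + q₂ = 1) {μ : ℂ}
    (hμ : μ ∈ spectrum ℂ ((jacobianSL K L M N p₁ q₁ p₂ q₂).map Complex.ofReal)) : μ.re < 0 := by
  set J := jacobianSL K L M N p₁ q₁ p₂ q₂
  have hdet : J.det < 0 := by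
    rw [det_jacobianSL hpq₁ hpq₂, neg_lt_zero]
    positivity
  have hsum : 0 < J.sumPrincipalMinors₂ + J.det := by
    rw [sumPrincipalMinors₂_jacobianSL_add_det hpq₁ hpq₂]
    positivity
  have hminors : 0 < J.sumPrincipalMinors₂ := by linarith
  refine Matrix.re_neg_of_mem_spectrum_map_ofReal ?_ hdet ?_ hμ
  · rw [trace_jacobianSL hpq₁ hpq₂]
    linarith
  · have : 0 < (K + L + M + N) * J.sumPrincipalMinors₂ := by positivity
    calc J.trace * J.sumPrincipalMinors₂
        = -J.sumPrincipalMinors₂ - (K + L + M + N) * J.sumPrincipalMinors₂ := by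
          rw [trace_jacobianSL hpq₁ hpq₂]; ring
      _ < J.det := by linarith

end jacobianSL

theorem stmt_13 (m1 m2 a N1a N1A N2a N2A : ℝ)
    (hm1 : 0 < m1) (hm2 : 0 < m2) (ha : 0 < a)
    (h1 : 0 < N1a) (h2 : 0 < N1A) (h3 : 0 < N2a) (h4 : 0 < N2A) :
    let p1 := N1A / (N1A + N1a); let q1 := N1a / (N1A + N1a)
    let p2 := N2A / (N2A + N2a); let q2 := N2a / (N2A + N2a)
    let JSL : Matrix (Fin 3) (Fin 3) ℝ :=
      !![-(1/2 : ℝ),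
         (1/2) * (a * m2 * N2A / N1A - m1 * N1A / (a * N2A)),
         -(1/2) * (a * m2 * N2a / N1a - m1 * N1a / (a * N2a));
         (q1 - q2) / 2,
         -(a * m2 * N2A / N1A + m1 * N1A / (a * N2A)) - (q1 + q2) / 4,
         (q1 + q2) / 4;
         (p2 - p1) / 2,
         (p1 + p2) / 4,
         -(a * m2 * N2a / N1a + m1 * N1a / (a * N2a)) - (p1 + p2) / 4]
    ∀ μ ∈ spectrum ℂ (JSL.map Complex.ofReal), μ.re < 0 := by
  intro p1 q1 p2 q2 JSL μ hμ
  have hpq₁ : p1 + q1 = 1 := by rw [← add_div, div_self (by positivity)]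
  have hpq₂ : p2 + q2 = 1 := by rw [← add_div, div_self (by positivity)]
  exact re_neg_of_mem_spectrum_jacobianSL (by positivity) (by positivity) (by positivity)
    (by positivity) (by positivity) (by positivity) (by positivity) (by positivity) hpq₁ hpq₂ hμ
end
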